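/- Let m, a, α, β, γ > 0 be real constants and let λ ∈ ℂ. There exist twice continuously differentiable functions f, φ : [0,1] → ℂ, not both identically zero, satisfying f''(x) = λ² f(x) and φ''(x) = λ² φ(x) for all x ∈ (0,1), f(0) = 0, (1 + aλ) f'(1) + λ(α + mλ) f(1) = −λ(α φ(1) + a φ'(1)), φ'(0) = (γλ + β) φ(0), and φ'(1) + mλ² φ(1) = 0, if and only if at least one of the following two characteristic equations holds: e^{2λ}(1 + α + (a+m)λ) + (1 − α) + (a − m)λ = 0, or e^{2λ}((1+γ)λ + β)(1 + mλ) = ((1−γ)λ − β)(1 − mλ). -/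

import Mathlib

open Set

/-!
A C² solution of `g'' = λ² g` on `[0, 1]` has the two first integrals `(g' ∓ λ g) e^{±λx}`,
so its boundary values at `1` are determined by its Cauchy data at `0`, and it vanishes
identically once that data vanishes. Eliminating the values at `1` with the boundary conditions,
the observer equation forces `D₂(λ) φ(0) = 0`; once `φ ≡ 0`, the plant equation forces
`D₁(λ) f'(0) = 0`, where `D₁ = plantChar` and `D₂ = observerChar`.

Conversely, if `D₁(λ) = 0` then `f = sinh(λx)`, `φ = 0` is an eigenpair. If `D₂(λ) = 0` but
`D₁(λ) ≠ 0`, the observer eigenfunction `φ = P e^{λx} + Q e^{-λx}` is completed by a plant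
component `C sinh(λx)`: the plant condition at `1` has become inhomogeneous, with coefficient
`λ e^{-λ} D₁(λ) ≠ 0` in front of `C`.
-/

noncomputable def expPair (l P Q : ℂ) (x : ℝ) : ℂ :=
  P * Complex.exp (l * x) + Q * Complex.exp (-l * x)

noncomputable def plantChar (m a α : ℝ) (l : ℂ) : ℂ :=
  Complex.exp (2 * l) * (1 + α + (a + m) * l) + (1 - α) + (a - m) * l

noncomputable def observerChar (m β γ : ℝ) (l : ℂ) : ℂ :=
  Complex.exp (2 * l) * ((1 + γ) * l + β) * (1 + m * l) - ((1 - γ) * l - β) * (1 - m * l)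

theorem hasDerivAt_cexp_mul_ofReal (c : ℂ) (x : ℝ) :
    HasDerivAt (fun y : ℝ => Complex.exp (c * y)) (c * Complex.exp (c * x)) x := by
  simpa [mul_comm] using ((Complex.ofRealCLM.hasDerivAt (x := x)).const_mul c).cexp

theorem cexp_mul_cexp_neg (z : ℂ) : Complex.exp z * Complex.exp (-z) = 1 := by
  rw [← Complex.exp_add, add_neg_cancel, Complex.exp_zero]

section Interval

variable {a b : ℝ}

theorem mul_cexp_eq_of_hasDerivAt {F : ℝ → ℂ} {μ : ℂ}
    (hF : ∀ x ∈ Icc a b, HasDerivAt F (μ * F x) x) :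
    ∀ x ∈ Icc a b, F x * Complex.exp (-μ * x) = F a * Complex.exp (-μ * a) := by
  have hG : ∀ x ∈ Icc a b, HasDerivAt (fun y : ℝ => F y * Complex.exp (-μ * y)) 0 x :=
    fun x hx => ((hF x hx).mul (hasDerivAt_cexp_mul_ofReal (-μ) x)).congr_deriv (by ring)
  apply constant_of_has_deriv_right_zero
  · exact fun x hx => (hG x hx).continuousAt.continuousWithinAt
  · exact fun x hx => (hG x (Ico_subset_Icc_self hx)).hasDerivWithinAt

variable {g : ℝ → ℂ} {l : ℂ}

theorem deriv_deriv_eq_on_Icc (hab : a < b) (hg : ContDiff ℝ 2 g)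
    (hode : ∀ x ∈ Ioo a b, deriv (deriv g) x = l ^ 2 * g x) :
    ∀ x ∈ Icc a b, deriv (deriv g) x = l ^ 2 * g x := by
  have hEq : EqOn (deriv (deriv g)) (fun x => l ^ 2 * g x) (closure (Ioo a b)) :=
    EqOn.closure hode ((hg.deriv' (n := 1)).continuous_deriv le_rfl)
      (continuous_const.mul hg.continuous)
  rwa [closure_Ioo hab.ne] at hEq

theorem deriv_sub_mul_mul_cexp_eq (hab : a < b) (hg : ContDiff ℝ 2 g)
    (hode : ∀ x ∈ Ioo a b, deriv (deriv g) x = l ^ 2 * g x) {μ : ℂ} (hμ : μ ^ 2 = l ^ 2) :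
    ∀ x ∈ Icc a b, (deriv g x - μ * g x) * Complex.exp (μ * x)
      = (deriv g a - μ * g a) * Complex.exp (μ * a) := by
  have hF : ∀ x ∈ Icc a b,
      HasDerivAt (fun y => deriv g y - μ * g y) (-μ * (deriv g x - μ * g x)) x := by
    intro x hx
    have hg' : HasDerivAt (deriv g) (deriv (deriv g) x) x :=
      ((hg.deriv' (n := 1)).differentiable one_ne_zero x).hasDerivAt
    refine (hg'.sub (((hg.differentiable two_ne_zero) x).hasDerivAt.const_mul μ)).congr_deriv ?_
    rw [deriv_deriv_eq_on_Icc hab hg hode x hx, ← hμ]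
    ring
  simpa only [neg_neg] using mul_cexp_eq_of_hasDerivAt hF

theorem eqOn_zero_of_ode (hab : a < b) (hg : ContDiff ℝ 2 g)
    (hode : ∀ x ∈ Ioo a b, deriv (deriv g) x = l ^ 2 * g x) (h₀ : g a = 0)
    (h₀' : deriv g a = 0) : ∀ x ∈ Icc a b, g x = 0 := by
  have hg' : ∀ x ∈ Icc a b, HasDerivAt g (l * g x) x := by
    intro x hx
    have h := deriv_sub_mul_mul_cexp_eq hab hg hode rfl x hx
    rw [h₀, h₀', mul_zero, sub_zero, zero_mul, mul_eq_zero, sub_eq_zero] at h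
    rw [← h.resolve_right (Complex.exp_ne_zero _)]
    exact ((hg.differentiable two_ne_zero) x).hasDerivAt
  intro x hx
  have h := mul_cexp_eq_of_hasDerivAt hg' x hx
  rw [h₀, zero_mul, mul_eq_zero] at h
  exact h.resolve_right (Complex.exp_ne_zero _)

end Interval

section Characteristic

variable {l : ℂ}

theorem observerChar_mul_eq_zero {m β γ : ℝ} {φ : ℝ → ℂ} (hφ : ContDiff ℝ 2 φ)
    (hode : ∀ x ∈ Ioo (0:ℝ) 1, deriv (deriv φ) x = l ^ 2 * φ x)
    (h₀ : deriv φ 0 = (γ * l + β) * φ 0) (h₁ : deriv φ 1 + m * l ^ 2 * φ 1 = 0) :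
    observerChar m β γ l * φ 0 = 0 := by
  have hp := deriv_sub_mul_mul_cexp_eq zero_lt_one hφ hode rfl 1 (right_mem_Icc.2 zero_le_one)
  have hm := deriv_sub_mul_mul_cexp_eq zero_lt_one hφ hode (neg_sq l) 1
    (right_mem_Icc.2 zero_le_one)
  simp only [Complex.ofReal_one, Complex.ofReal_zero, mul_one, mul_zero, Complex.exp_zero] at hp hm
  rw [h₀] at hp hm
  rw [observerChar, two_mul, Complex.exp_add]
  linear_combination (-(1 - m * l)) * hp
    - (Complex.exp l * Complex.exp l * (1 + m * l)) * hm + (2 * Complex.exp l) * h₁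
    + (Complex.exp l * (1 + m * l) * (deriv φ 1 + l * φ 1)) * cexp_mul_cexp_neg l

theorem plantChar_mul_eq_zero {m a α : ℝ} {f : ℝ → ℂ} (hf : ContDiff ℝ 2 f)
    (hode : ∀ x ∈ Ioo (0:ℝ) 1, deriv (deriv f) x = l ^ 2 * f x) (h₀ : f 0 = 0)
    (h₁ : (1 + a * l) * deriv f 1 + l * (α + m * l) * f 1 = 0) :
    plantChar m a α l * deriv f 0 = 0 := by
  have hp := deriv_sub_mul_mul_cexp_eq zero_lt_one hf hode rfl 1 (right_mem_Icc.2 zero_le_one)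
  have hm := deriv_sub_mul_mul_cexp_eq zero_lt_one hf hode (neg_sq l) 1
    (right_mem_Icc.2 zero_le_one)
  simp only [Complex.ofReal_one, Complex.ofReal_zero, mul_one, mul_zero, Complex.exp_zero] at hp hm
  rw [h₀] at hp hm
  rw [plantChar, two_mul, Complex.exp_add]
  linear_combination (-(1 - α + (a - m) * l)) * hp
    - (Complex.exp l * Complex.exp l * (1 + α + (a + m) * l)) * hm + (2 * Complex.exp l) * h₁
    + (Complex.exp l * (1 + α + (a + m) * l) * (deriv f 1 + l * f 1)) * cexp_mul_cexp_neg l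

end Characteristic

theorem eqOn_zero_of_char_ne_zero {m a α β γ : ℝ} {l : ℂ} {f φ : ℝ → ℂ}
    (hplantChar : plantChar m a α l ≠ 0) (hobsChar : observerChar m β γ l ≠ 0)
    (hf : ContDiff ℝ 2 f) (hφ : ContDiff ℝ 2 φ)
    (hode_f : ∀ x ∈ Ioo (0:ℝ) 1, deriv (deriv f) x = l ^ 2 * f x)
    (hode_φ : ∀ x ∈ Ioo (0:ℝ) 1, deriv (deriv φ) x = l ^ 2 * φ x) (hf₀ : f 0 = 0)
    (hplant : (1 + a * l) * deriv f 1 + l * (α + m * l) * f 1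
      = -(l * (α * φ 1 + a * deriv φ 1)))
    (hobs₀ : deriv φ 0 = (γ * l + β) * φ 0) (hobs₁ : deriv φ 1 + m * l ^ 2 * φ 1 = 0) :
    ∀ x ∈ Icc (0:ℝ) 1, f x = 0 ∧ φ x = 0 := by
  have one_mem : (1 : ℝ) ∈ Icc (0 : ℝ) 1 := right_mem_Icc.2 zero_le_one
  have hφ₀ : φ 0 = 0 :=
    (mul_eq_zero.1 (observerChar_mul_eq_zero hφ hode_φ hobs₀ hobs₁)).resolve_left hobsChar
  have hφ_zero := eqOn_zero_of_ode zero_lt_one hφ hode_φ hφ₀ (by rw [hobs₀, hφ₀, mul_zero])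
  rw [hφ_zero 1 one_mem, mul_zero, add_zero] at hobs₁
  rw [hφ_zero 1 one_mem, hobs₁, mul_zero, mul_zero, add_zero, mul_zero, neg_zero] at hplant
  have hf₀' : deriv f 0 = 0 :=
    (mul_eq_zero.1 (plantChar_mul_eq_zero hf hode_f hf₀ hplant)).resolve_left hplantChar
  exact fun x hx => ⟨eqOn_zero_of_ode zero_lt_one hf hode_f hf₀ hf₀' x hx, hφ_zero x hx⟩

-- The coefficients are chosen to satisfy the boundary condition at `0`, with `φ(0) = 2λ`.
noncomputable def observerMode (β γ : ℝ) (l : ℂ) : ℝ → ℂ :=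
  expPair l ((1 + γ) * l + β) ((1 - γ) * l - β)

section Modes

variable {l : ℂ}

theorem hasDerivAt_expPair (l P Q : ℂ) (x : ℝ) :
    HasDerivAt (expPair l P Q) (expPair l (l * P) (-(l * Q)) x) x :=
  (((hasDerivAt_cexp_mul_ofReal l x).const_mul P).add
    ((hasDerivAt_cexp_mul_ofReal (-l) x).const_mul Q)).congr_deriv (by rw [expPair]; ring)

theorem deriv_expPair (l P Q : ℂ) : deriv (expPair l P Q) = expPair l (l * P) (-(l * Q)) :=
  funext fun x => (hasDerivAt_expPair l P Q x).deriv

theorem contDiff_expPair (l P Q : ℂ) : ContDiff ℝ 2 (expPair l P Q) := by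
  have : ContDiff ℝ 2 ((↑) : ℝ → ℂ) := Complex.ofRealCLM.contDiff
  unfold expPair
  fun_prop

theorem deriv_deriv_expPair (l P Q : ℂ) (x : ℝ) :
    deriv (deriv (expPair l P Q)) x = l ^ 2 * expPair l P Q x := by
  rw [deriv_expPair, deriv_expPair, expPair, expPair]
  ring

theorem plant_boundary_expPair (m a α : ℝ) (C : ℂ) :
    (1 + a * l) * deriv (expPair l C (-C)) 1 + l * (α + m * l) * expPair l C (-C) 1
      = C * l * Complex.exp (-l) * plantChar m a α l := by
  rw [deriv_expPair, expPair, expPair, plantChar, two_mul, Complex.exp_add]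
  simp only [Complex.ofReal_one, mul_one]
  linear_combination (-(C * l * (1 + α + (a + m) * l) * Complex.exp l)) * cexp_mul_cexp_neg l

theorem expPair_one_ne_zero_of_plantChar_eq_zero {m a α : ℝ} (h : plantChar m a α l = 0) :
    expPair l 1 (-1) 1 ≠ 0 := by
  intro h₁
  have hexp : Complex.exp (2 * l) = 1 := by
    rw [two_mul, Complex.exp_add]
    simp only [expPair, Complex.ofReal_one, mul_one, one_mul, neg_mul] at h₁
    linear_combination Complex.exp l * h₁ + cexp_mul_cexp_neg l
  obtain ⟨n, hn⟩ := Complex.exp_eq_one_iff.1 hexp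
  have hl : l = n * Real.pi * Complex.I := by linear_combination hn / 2
  rw [plantChar, hexp, hl] at h
  simpa using congrArg Complex.re h

theorem observerChar_zero (m β γ : ℝ) : observerChar m β γ 0 = 2 * β := by
  simp only [observerChar, mul_zero, Complex.exp_zero]
  ring

theorem observerMode_zero (β γ : ℝ) : observerMode β γ l 0 = 2 * l := by
  simp only [observerMode, expPair, Complex.ofReal_zero, mul_zero, Complex.exp_zero]
  ring

theorem deriv_observerMode_zero (β γ : ℝ) :
    deriv (observerMode β γ l) 0 = (γ * l + β) * observerMode β γ l 0 := by
  simp only [observerMode, deriv_expPair, expPair, Complex.ofReal_zero, mul_zero,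
    Complex.exp_zero]
  ring

theorem deriv_observerMode_one_add (m β γ : ℝ) :
    deriv (observerMode β γ l) 1 + m * l ^ 2 * observerMode β γ l 1
      = l * Complex.exp (-l) * observerChar m β γ l := by
  rw [observerMode, deriv_expPair, expPair, expPair, observerChar, two_mul, Complex.exp_add]
  simp only [Complex.ofReal_one, mul_one]
  linear_combination (-(l * Complex.exp l * (1 + m * l) * ((1 + γ) * l + β))) *
    cexp_mul_cexp_neg l

end Modes

theorem stmt14_general (m a α β γ : ℝ) (hβ : 0 < β) (l : ℂ) :
    (∃ f φ : ℝ → ℂ, ContDiff ℝ 2 f ∧ ContDiff ℝ 2 φ ∧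
        (∃ x ∈ Icc (0:ℝ) 1, f x ≠ 0 ∨ φ x ≠ 0) ∧
        (∀ x ∈ Ioo (0:ℝ) 1, deriv (deriv f) x = l ^ 2 * f x) ∧
        (∀ x ∈ Ioo (0:ℝ) 1, deriv (deriv φ) x = l ^ 2 * φ x) ∧
        f 0 = 0 ∧
        (1 + a * l) * deriv f 1 + l * (α + m * l) * f 1
          = -(l * (α * φ 1 + a * deriv φ 1)) ∧
        deriv φ 0 = (γ * l + β) * φ 0 ∧
        deriv φ 1 + m * l ^ 2 * φ 1 = 0) ↔
    (Complex.exp (2 * l) * (1 + α + (a + m) * l) + (1 - α) + (a - m) * l = 0 ∨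
      Complex.exp (2 * l) * ((1 + γ) * l + β) * (1 + m * l)
        = ((1 - γ) * l - β) * (1 - m * l)) := by
  have one_mem : (1 : ℝ) ∈ Icc (0 : ℝ) 1 := right_mem_Icc.2 zero_le_one
  constructor
  · rintro ⟨f, φ, hf, hφ, ⟨x₀, hx₀, hne⟩, hode_f, hode_φ, hf₀, hplant, hobs₀, hobs₁⟩
    by_contra! hchar
    have hzero := eqOn_zero_of_char_ne_zero hchar.1 (sub_ne_zero.2 hchar.2) hf hφ hode_f hode_φ
      hf₀ hplant hobs₀ hobs₁ x₀ hx₀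
    exact hne.elim (· hzero.1) (· hzero.2)
  · intro hchar
    by_cases hplantChar : plantChar m a α l = 0
    · refine ⟨expPair l 1 (-1), 0, contDiff_expPair l 1 (-1), contDiff_const,
        ⟨1, one_mem, Or.inl (expPair_one_ne_zero_of_plantChar_eq_zero hplantChar)⟩,
        fun x _ => deriv_deriv_expPair l 1 (-1) x, fun x _ => by simp, by simp [expPair], ?_,
        by simp, by simp⟩
      simp [plant_boundary_expPair, hplantChar]
    have hobsChar : observerChar m β γ l = 0 := sub_eq_zero.2 (hchar.resolve_left hplantChar)
    have hl : l ≠ 0 := by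
      rintro rfl
      rw [observerChar_zero, mul_eq_zero] at hobsChar
      exact hβ.ne' (by exact_mod_cast hobsChar.resolve_left two_ne_zero)
    obtain ⟨C, hC⟩ : ∃ C : ℂ, C * (l * Complex.exp (-l) * plantChar m a α l) =
        -(l * (α * observerMode β γ l 1 + a * deriv (observerMode β γ l) 1)) :=
      ⟨_, div_mul_cancel₀ _ (mul_ne_zero (mul_ne_zero hl (Complex.exp_ne_zero _)) hplantChar)⟩
    refine ⟨expPair l C (-C), observerMode β γ l,
      contDiff_expPair _ _ _, contDiff_expPair _ _ _, ⟨0, left_mem_Icc.2 zero_le_one, Or.inr ?_⟩,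
      fun x _ => deriv_deriv_expPair _ _ _ x, fun x _ => deriv_deriv_expPair _ _ _ x,
      by simp [expPair], ?_, deriv_observerMode_zero β γ,
      by rw [deriv_observerMode_one_add, hobsChar, mul_zero]⟩
    · rw [observerMode_zero]
      exact mul_ne_zero two_ne_zero hl
    · rw [plant_boundary_expPair, ← hC]
      ring

/-- eigenvalue problem for the closed-loop operator 𝒜, a coupled
pair of boundary value problems for `f` (plant) and `φ` (observer error).
A not-both-zero C² solution pair exists iff λ satisfies the characteristic
equation of A or that of A₂. -/
theorem stmt14 (m a α β γ : ℝ) (hm : 0 < m) (ha : 0 < a) (hα : 0 < α)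
    (hβ : 0 < β) (hγ : 0 < γ) (l : ℂ) :
    (∃ f φ : ℝ → ℂ, ContDiff ℝ 2 f ∧ ContDiff ℝ 2 φ ∧
        (∃ x ∈ Icc (0:ℝ) 1, f x ≠ 0 ∨ φ x ≠ 0) ∧
        (∀ x ∈ Ioo (0:ℝ) 1, deriv (deriv f) x = l ^ 2 * f x) ∧
        (∀ x ∈ Ioo (0:ℝ) 1, deriv (deriv φ) x = l ^ 2 * φ x) ∧
        f 0 = 0 ∧
        (1 + a * l) * deriv f 1 + l * (α + m * l) * f 1
          = -(l * (α * φ 1 + a * deriv φ 1)) ∧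
        deriv φ 0 = (γ * l + β) * φ 0 ∧
        deriv φ 1 + m * l ^ 2 * φ 1 = 0) ↔
    (Complex.exp (2 * l) * (1 + α + (a + m) * l) + (1 - α) + (a - m) * l = 0 ∨
      Complex.exp (2 * l) * ((1 + γ) * l + β) * (1 + m * l)
        = ((1 - γ) * l - β) * (1 - m * l)) :=
  stmt14_general m a α β γ hβ l
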